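/- arXiv:1703.07262 — 2 statements merged into one kernel-verified Lean document; each statement's English description precedes it below -/
import Mathlib

section
/- For every real t, the exponential generating function of the Motzkin numbers satisfies ∑_{n=0}^∞ (t^n/n!) m_n = C_1(t²) · e^t, where C_1(z) = ∑_{r=0}^∞ z^r/(r!·(r+1)!). -/
/-!
`C_1(t²) = ∑_r t^{2r}/(r!(r+1)!)` is a power series in `t` supported on the even exponents, and
its Cauchy product with `e^t = ∑_k t^k/k!` has `n`-th coefficient
`∑_{2r+k=n} 1/(r!(r+1)!k!) = m_n/n!`. Both series converge absolutely, so the product formula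
applies.
-/

open Finset

/-- The Motzkin numbers `m_n = n! ∑_{r=0}^{⌊n/2⌋} 1/((n-2r)!·r!·(r+1)!)`,
as real numbers. -/
noncomputable def motzkinR (n : ℕ) : ℝ :=
  (n.factorial : ℝ) * ∑ r ∈ range (n / 2 + 1),
    1 / (((n - 2 * r).factorial : ℝ) * (r.factorial : ℝ) * ((r + 1).factorial : ℝ))

/-- The Bessel–Tricomi function `C_q(z) = ∑_{r=0}^∞ z^r/(r!·(q+r)!)`. -/
noncomputable def besselTricomi (q : ℕ) (z : ℝ) : ℝ :=
  ∑' r : ℕ, z ^ r / ((r.factorial : ℝ) * ((q + r).factorial : ℝ))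

open Function

theorem sum_range_extend_two_mul_mul {R : Type*} [Semiring R] (a b : ℕ → R) (n : ℕ) :
    ∑ k ∈ range (n + 1), extend (2 * ·) a 0 k * b (n - k) =
      ∑ r ∈ range (n / 2 + 1), a r * b (n - 2 * r) := by
  have hinj : Injective (2 * · : ℕ → ℕ) := mul_right_injective₀ two_ne_zero
  rw [← sum_subset (s₁ := (range (n / 2 + 1)).image (2 * ·)), sum_image hinj.injOn]
  · simp only [hinj.extend_apply]
  · intro k
    simp only [mem_image, mem_range]
    omega
  · rintro k hk hk'
    rw [extend_apply', Pi.zero_apply, zero_mul]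
    rintro ⟨r, rfl⟩
    simp only [mem_image, mem_range, not_exists, not_and] at hk hk'
    exact hk' r (by omega) rfl

theorem hasSum_sum_range_div_two_mul_of_summable_norm {R : Type*} [NormedRing R]
    [CompleteSpace R] {a b : ℕ → R} (ha : Summable (‖a ·‖)) (hb : Summable (‖b ·‖)) :
    HasSum (fun n ↦ ∑ r ∈ range (n / 2 + 1), a r * b (n - 2 * r)) ((∑' n, a n) * ∑' n, b n) := by
  have hinj : Injective (2 * · : ℕ → ℕ) := mul_right_injective₀ two_ne_zero
  have ha' : Summable (‖extend (2 * ·) a 0 ·‖) := by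
    refine ((summable_extend_zero hinj).2 ha).congr fun n ↦ ?_
    simp [apply_extend norm, comp_def, Pi.zero_def]
  simpa [sum_range_extend_two_mul_mul, tsum_extend_zero hinj] using
    hasSum_sum_range_mul_of_summable_norm ha' hb

theorem summable_norm_besselTricomi_term (q : ℕ) (z : ℝ) :
    Summable fun r : ℕ ↦ ‖z ^ r / ((r.factorial : ℝ) * ((q + r).factorial : ℝ))‖ := by
  refine (Real.summable_pow_div_factorial ‖z‖).of_nonneg_of_le (fun _ ↦ norm_nonneg _) fun r ↦ ?_
  rw [norm_div, norm_pow, norm_mul, Real.norm_natCast, Real.norm_natCast]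
  gcongr
  exact le_mul_of_one_le_right (by positivity) (by exact_mod_cast (q + r).factorial_pos)

theorem pow_div_factorial_mul_motzkinR (t : ℝ) (n : ℕ) :
    t ^ n / (n.factorial : ℝ) * motzkinR n = ∑ r ∈ range (n / 2 + 1),
      (t ^ 2) ^ r / ((r.factorial : ℝ) * ((1 + r).factorial : ℝ)) *
        (t ^ (n - 2 * r) / ((n - 2 * r).factorial : ℝ)) := by
  rw [motzkinR, ← mul_assoc, div_mul_cancel₀ _ (by positivity), mul_sum]
  refine sum_congr rfl fun r hr ↦ ?_
  have h : t ^ n = (t ^ 2) ^ r * t ^ (n - 2 * r) := by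
    rw [← pow_mul, ← pow_add, Nat.add_sub_cancel' (by rw [mem_range] at hr; omega)]
  rw [h, add_comm 1 r]
  field_simp

/-- `∑_{n=0}^∞ (t^n/n!) m_n = C_1(t²) e^t` for every real `t`. -/
theorem motzkin_egf (t : ℝ) :
    HasSum (fun n : ℕ => t ^ n / (n.factorial : ℝ) * motzkinR n)
      (besselTricomi 1 (t ^ 2) * Real.exp t) := by
  rw [Real.exp_eq_exp_ℝ, NormedSpace.exp_eq_tsum_div, besselTricomi]
  simpa only [pow_div_factorial_mul_motzkinR] using
    hasSum_sum_range_div_two_mul_of_summable_norm (summable_norm_besselTricomi_term 1 (t ^ 2))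
      (NormedSpace.norm_expSeries_div_summable t)
end

section
/- For every integer n ≥ 0 and all real x, y, the index-duplication formula for the two-variable Hermite polynomials holds: H_{2n}(x,y) = ∑_{r=0}^{n} binomial(n,r)² · r! · (2y)^r · (H_{n-r}(x,y))². -/
open Finset

/-- The two-variable Hermite (Kampé de Fériet) polynomials
`H_n(x,y) = n! ∑_{r=0}^{⌊n/2⌋} x^{n-2r} y^r / ((n-2r)!·r!)`. -/
noncomputable def hermite2 (n : ℕ) (x y : ℝ) : ℝ :=
  (n.factorial : ℝ) * ∑ r ∈ range (n / 2 + 1),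
    x ^ (n - 2 * r) * y ^ r / (((n - 2 * r).factorial : ℝ) * (r.factorial : ℝ))

/-!
The `H_n` are determined by `H_0 = 1` and the three-term recurrence
`H_{n+1} = x H_n + 2 y n H_{n-1}`, which follows from Pascal's rule on the coefficients.
The sums `S(m, n) = ∑_r C(m,r) C(n,r) r! (2y)^r H_{m-r} H_{n-r}` obey the matching recurrence
`S(m, n+1) = x S(m, n) + 2 y n S(m, n-1) + 2 y m S(m-1, n)`: split `C(n+1, r)` by Pascal's rule and
expand `H_{n+1-r}` by the recurrence. Induction on `n` then gives `H_{m+n} = S(m, n)`, and the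
duplication formula is the case `m = n`.
-/

theorem Nat.sub_mul_choose (n r : ℕ) : (n - r) * n.choose r = n * (n - 1).choose r := by
  cases n with
  | zero => simp
  | succ n => rw [Nat.add_sub_cancel, mul_comm, ← Nat.choose_mul_succ_eq, mul_comm]

theorem Nat.add_one_mul_choose_add_one (m s : ℕ) :
    (s + 1) * m.choose (s + 1) = m * (m - 1).choose s := by
  cases m with
  | zero => simp
  | succ m => rw [Nat.add_sub_cancel, Nat.add_one_mul_choose_eq, mul_comm]

/-- `n! / ((n - 2r)! r!)`, written so that it vanishes when `2r > n`. -/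
def hermite2Coeff (n r : ℕ) : ℕ := n.choose (2 * r) * r.centralBinom * r.factorial

theorem hermite2Coeff_mul_factorial_mul_factorial {n r : ℕ} (h : 2 * r ≤ n) :
    hermite2Coeff n r * (n - 2 * r).factorial * r.factorial = n.factorial := by
  have hcentral : r.centralBinom * r.factorial * r.factorial = (2 * r).factorial := by
    have := Nat.choose_mul_factorial_mul_factorial (show r ≤ 2 * r by omega)
    rwa [show 2 * r - r = r by omega, ← Nat.centralBinom_eq_two_mul_choose] at this
  rw [← Nat.choose_mul_factorial_mul_factorial h, ← hcentral, hermite2Coeff]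
  ring

theorem hermite2Coeff_eq_zero {n r : ℕ} (h : n < 2 * r) : hermite2Coeff n r = 0 := by
  simp [hermite2Coeff, Nat.choose_eq_zero_of_lt h]

theorem hermite2Coeff_add_two_succ (n r : ℕ) :
    hermite2Coeff (n + 2) (r + 1) =
      hermite2Coeff (n + 1) (r + 1) + 2 * (n + 1) * hermite2Coeff n r := by
  have hpascal := Nat.choose_succ_succ' (n + 1) (2 * r + 1)
  have habsorb := Nat.add_one_mul_choose_eq n (2 * r)
  have hcentral := Nat.succ_mul_centralBinom_succ r
  simp only [hermite2Coeff, Nat.factorial_succ, show 2 * (r + 1) = 2 * r + 1 + 1 by ring, hpascal]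
  linear_combination ((n + 1).choose (2 * r + 1) * r.factorial) * hcentral +
    (2 * r.centralBinom * r.factorial) * habsorb.symm

theorem hermite2_eq_sum_coeff {n N : ℕ} (hN : n / 2 < N) (x y : ℝ) :
    hermite2 n x y = ∑ r ∈ range N, (hermite2Coeff n r : ℝ) * x ^ (n - 2 * r) * y ^ r := by
  rw [hermite2, mul_sum]
  refine (sum_congr rfl fun r hr => ?_).trans
    (sum_subset (range_subset_range.2 (by omega : n / 2 + 1 ≤ N)) fun r _ hr => ?_)
  · have h : 2 * r ≤ n := by simp only [mem_range] at hr; omega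
    rw [← hermite2Coeff_mul_factorial_mul_factorial h]
    push_cast
    field_simp
  · rw [hermite2Coeff_eq_zero (by simp only [mem_range] at hr; omega)]
    simp

theorem hermite2_zero (x y : ℝ) : hermite2 0 x y = 1 := by
  simp [hermite2]

theorem hermite2_one (x y : ℝ) : hermite2 1 x y = x := by
  simp [hermite2]

theorem hermite2_add_two (n : ℕ) (x y : ℝ) :
    hermite2 (n + 2) x y = x * hermite2 (n + 1) x y + 2 * y * (n + 1) * hermite2 n x y := by
  have hterm : ∀ s,
      (hermite2Coeff (n + 2) (s + 1) : ℝ) * x ^ (n + 2 - 2 * (s + 1)) * y ^ (s + 1) =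
      x * ((hermite2Coeff (n + 1) (s + 1) : ℝ) * x ^ (n + 1 - 2 * (s + 1)) * y ^ (s + 1)) +
        2 * y * (n + 1) * ((hermite2Coeff n s : ℝ) * x ^ (n - 2 * s) * y ^ s) := by
    intro s
    rw [hermite2Coeff_add_two_succ, show n + 2 - 2 * (s + 1) = n - 2 * s by omega]
    rcases le_or_gt (2 * (s + 1)) (n + 1) with h | h
    · rw [show n - 2 * s = n + 1 - 2 * (s + 1) + 1 by omega]
      push_cast
      ring
    · rw [hermite2Coeff_eq_zero h]
      push_cast
      ring
  have hzero : (hermite2Coeff (n + 2) 0 : ℝ) * x ^ (n + 2 - 2 * 0) * y ^ 0 =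
      x * ((hermite2Coeff (n + 1) 0 : ℝ) * x ^ (n + 1 - 2 * 0) * y ^ 0) := by
    simp [hermite2Coeff, pow_succ, mul_comm]
  rw [hermite2_eq_sum_coeff (N := n + 2) (by omega),
    hermite2_eq_sum_coeff (N := n + 2) (by omega), hermite2_eq_sum_coeff (N := n + 1) (by omega),
    sum_range_succ' _ (n + 1), sum_range_succ' _ (n + 1), sum_congr rfl fun s _ => hterm s,
    sum_add_distrib, ← mul_sum, ← mul_sum, hzero]
  ring

theorem hermite2_succ (n : ℕ) (x y : ℝ) :
    hermite2 (n + 1) x y = x * hermite2 n x y + 2 * y * n * hermite2 (n - 1) x y := by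
  cases n with
  | zero => simp [hermite2_zero, hermite2_one]
  | succ n => simpa using hermite2_add_two n x y

noncomputable def hermite2ProductTerm (x y : ℝ) (m n r : ℕ) : ℝ :=
  m.choose r * n.choose r * r.factorial * (2 * y) ^ r *
    hermite2 (m - r) x y * hermite2 (n - r) x y

theorem sum_range_hermite2ProductTerm_of_lt {n N : ℕ} (h : n < N) (x y : ℝ) (m : ℕ) :
    ∑ r ∈ range N, hermite2ProductTerm x y m n r =
      ∑ r ∈ range (n + 1), hermite2ProductTerm x y m n r := by
  refine (sum_subset (range_subset_range.2 (by omega)) fun r _ hr => ?_).symm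
  have hnr : n < r := by simp only [mem_range] at hr; omega
  rw [hermite2ProductTerm, Nat.choose_eq_zero_of_lt hnr]
  simp

theorem sum_hermite2ProductTerm_succ (x y : ℝ) (m n : ℕ) :
    ∑ r ∈ range (n + 2), hermite2ProductTerm x y m (n + 1) r =
      x * ∑ r ∈ range (n + 1), hermite2ProductTerm x y m n r +
      2 * y * n * ∑ r ∈ range (n - 1 + 1), hermite2ProductTerm x y m (n - 1) r +
      2 * y * m * ∑ r ∈ range (n + 1), hermite2ProductTerm x y (m - 1) n r := by
  set A : ℕ → ℝ := fun r => m.choose r * n.choose r * r.factorial * (2 * y) ^ r *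
    hermite2 (m - r) x y * hermite2 (n + 1 - r) x y with hA
  have hpascal : ∀ s, hermite2ProductTerm x y m (n + 1) (s + 1) =
      A (s + 1) + 2 * y * m * hermite2ProductTerm x y (m - 1) n s := by
    intro s
    have habsorb := congrArg (Nat.cast (R := ℝ)) (Nat.add_one_mul_choose_add_one m s)
    push_cast at habsorb
    simp only [hermite2ProductTerm, hA]
    rw [Nat.choose_succ_succ', Nat.factorial_succ,
      show m - (s + 1) = m - 1 - s by omega, Nat.add_sub_add_right]
    push_cast
    linear_combination (n.choose s * s.factorial * (2 * y) ^ s * (2 * y) *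
      hermite2 (m - 1 - s) x y * hermite2 (n - s) x y) * habsorb
  have hrec : ∀ r, A r = x * hermite2ProductTerm x y m n r +
      2 * y * n * hermite2ProductTerm x y m (n - 1) r := by
    intro r
    simp only [hA, hermite2ProductTerm]
    rcases le_or_gt r n with h | h
    · have habsorb := congrArg (Nat.cast (R := ℝ)) (Nat.sub_mul_choose n r)
      push_cast [h] at habsorb
      rw [show n + 1 - r = n - r + 1 by omega, hermite2_succ, show n - r - 1 = n - 1 - r by omega]
      push_cast [h]
      linear_combination (2 * y * m.choose r * r.factorial * (2 * y) ^ r *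
        hermite2 (m - r) x y * hermite2 (n - 1 - r) x y) * habsorb
    · simp [Nat.choose_eq_zero_of_lt h, Nat.choose_eq_zero_of_lt (show n - 1 < r by omega)]
  rw [sum_range_succ', sum_congr rfl fun s _ => hpascal s, sum_add_distrib, add_right_comm,
    show hermite2ProductTerm x y m (n + 1) 0 = A 0 by simp [hA, hermite2ProductTerm],
    ← sum_range_succ' A, sum_congr rfl fun r _ => hrec r, sum_add_distrib,
    ← mul_sum, ← mul_sum, ← mul_sum, sum_range_hermite2ProductTerm_of_lt (by omega),
    sum_range_hermite2ProductTerm_of_lt (n := n - 1) (by omega)]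

theorem hermite2_add_eq_sum (x y : ℝ) (m n : ℕ) :
    hermite2 (m + n) x y = ∑ r ∈ range (n + 1), hermite2ProductTerm x y m n r := by
  induction n using Nat.strong_induction_on generalizing m with
  | _ n ih =>
    rcases n with _ | n
    · simp [hermite2ProductTerm, hermite2_zero]
    -- the factor `k` kills the case `k = 0`, where `a + (k - 1) ≠ a + k - 1`
    have hpred : ∀ a k : ℕ,
        (k : ℝ) * hermite2 (a + (k - 1)) x y = k * hermite2 (a + k - 1) x y := by
      rintro a (_ | k)
      · simp
      · rw [Nat.add_sub_cancel, ← add_assoc, Nat.add_sub_cancel]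
    rw [sum_hermite2ProductTerm_succ, ← ih n (by omega), ← ih (n - 1) (by omega),
      ← ih n (by omega), mul_assoc _ (n : ℝ), hpred, mul_assoc _ (m : ℝ), add_comm (m - 1),
      hpred, Nat.add_comm n m, ← add_assoc, hermite2_succ]
    push_cast
    ring

/-- the index-duplication formula
`H_{2n}(x,y) = ∑_{r=0}^{n} C(n,r)² r! (2y)^r (H_{n-r}(x,y))²`. -/
theorem hermite2_duplication (n : ℕ) (x y : ℝ) :
    hermite2 (2 * n) x y =
      ∑ r ∈ range (n + 1),
        ((n.choose r : ℝ)) ^ 2 * (r.factorial : ℝ) * (2 * y) ^ r *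
          (hermite2 (n - r) x y) ^ 2 := by
  rw [two_mul, hermite2_add_eq_sum]
  refine sum_congr rfl fun r _ => ?_
  rw [hermite2ProductTerm]
  ring
end
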